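/- arXiv:1707.00831 — 4 statements merged into one kernel-verified Lean document; each statement's English description precedes it below -/
import Mathlib

section
/- Let p be a prime and α ≥ 1 an integer such that either p is odd, or p = 2 and α ≥ 2. Then for every natural number n, p^{2α} divides f_p(p^α · n) − f_p(p^α)^n. -/
/-!
Write `P = p ^ α`. The factors of `f_p(P (n + 1))` beyond `P n` are `P n + i` for
`1 ≤ i ≤ P`, `p ∤ i`. Pairing `i` with `P - i` gives
`(P n + i) (P n + P - i) = i (P - i) + P² n (n + 1)`, so this block is congruent to `f_p(P)`
modulo `P²`, and induction on `n` finishes. The pairing has no fixed point: `2 i = P` with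
`p ∤ i` forces `p = 2` and `α = 1`.
-/

/-- `fp p n` is the product of all integers `i` with `1 ≤ i ≤ n` and `p ∤ i`. -/
def fp (p n : ℕ) : ℕ := ∏ i ∈ (Finset.Icc 1 n).filter (fun i => ¬ p ∣ i), i

open Finset

theorem Finset.prod_eq_prod_of_involution {ι M : Type*} [CommMonoid M] {s : Finset ι}
    {f g : ι → M} (σ : ι → ι) (hσ : ∀ i ∈ s, σ i ∈ s) (hσσ : ∀ i ∈ s, σ (σ i) = i)
    (hne : ∀ i ∈ s, σ i ≠ i) (hpair : ∀ i ∈ s, f i * f (σ i) = g i * g (σ i)) :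
    ∏ i ∈ s, f i = ∏ i ∈ s, g i := by
  classical
  induction s using Finset.strongInduction with | H s ih => ?_
  obtain rfl | ⟨x, hx⟩ := s.eq_empty_or_nonempty
  · simp
  set t := s \ {x, σ x}
  have hsub : {x, σ x} ⊆ s := by simp [insert_subset_iff, hx, hσ]
  have ht : t ⊂ s := sdiff_ssubset hsub (by simp)
  have hσt : ∀ i ∈ t, σ i ∈ t := by
    intro i hi
    simp only [t, mem_sdiff, mem_insert, mem_singleton, not_or] at hi ⊢
    refine ⟨hσ i hi.1, fun h => hi.2.2 ?_, fun h => hi.2.1 ?_⟩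
    · rw [← h, hσσ i hi.1]
    · rw [← hσσ i hi.1, h, hσσ x hx]
  have hrest := ih t ht hσt (fun i hi => hσσ i (sdiff_subset hi))
    (fun i hi => hne i (sdiff_subset hi)) (fun i hi => hpair i (sdiff_subset hi))
  rw [← prod_sdiff hsub, ← prod_sdiff hsub, hrest, prod_pair (hne x hx).symm,
    prod_pair (hne x hx).symm, hpair x hx]

theorem fp_add (p a m : ℕ) (ha : p ∣ a) :
    fp p (a + m) = fp p a * ∏ i ∈ (Icc 1 m).filter (fun i => ¬ p ∣ i), (a + i) := by
  have hsplit : Icc 1 (a + m) = Icc 1 a ∪ (Icc 1 m).map (addLeftEmbedding a) := by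
    ext i; simp only [map_add_left_Icc, mem_union, mem_Icc]; omega
  have hdisj : Disjoint (Icc 1 a) ((Icc 1 m).map (addLeftEmbedding a)) := by
    rw [map_add_left_Icc, disjoint_left]; intro i; simp only [mem_Icc]; omega
  rw [fp, fp, hsplit, filter_union, prod_union (disjoint_filter_filter hdisj), filter_map,
    prod_map]
  congr 1
  refine prod_congr (filter_congr fun i _ => ?_) fun i _ => rfl
  simp [Nat.dvd_add_right ha]

theorem prod_add_eq_prod_in_zmod_sq {p P a : ℕ} (hpP : p ∣ P) (hP : ∀ i, ¬ p ∣ i → 2 * i ≠ P)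
    (ha : P ∣ a) :
    ∏ i ∈ (Icc 1 P).filter (fun i => ¬ p ∣ i), ((a + i : ℕ) : ZMod (P ^ 2)) =
      ∏ i ∈ (Icc 1 P).filter (fun i => ¬ p ∣ i), (i : ZMod (P ^ 2)) := by
  have hlt : ∀ i ∈ (Icc 1 P).filter (fun i => ¬ p ∣ i), i < P := by
    intro i hi
    simp only [mem_filter, mem_Icc] at hi
    exact lt_of_le_of_ne hi.1.2 fun h => hi.2 (h ▸ hpP)
  refine prod_eq_prod_of_involution (P - ·) (fun i hi => ?_) (fun i hi => ?_) (fun i hi => ?_)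
    (fun i hi => ?_)
  · have hiP := hlt i hi
    simp only [mem_filter, mem_Icc] at hi ⊢
    refine ⟨by omega, fun hdvd => hi.2 ?_⟩
    simpa [Nat.sub_sub_self hiP.le] using Nat.dvd_sub hpP hdvd
  · exact Nat.sub_sub_self (hlt i hi).le
  · have hiP := hlt i hi
    simp only [mem_filter] at hi
    have h2i := hP i hi.2
    omega
  · obtain ⟨k, rfl⟩ := ha
    have hsq : (P : ZMod (P ^ 2)) ^ 2 = 0 := by exact_mod_cast ZMod.natCast_self (P ^ 2)
    push_cast [Nat.cast_sub (hlt i hi).le]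
    linear_combination (k * (k + 1) : ZMod (P ^ 2)) * hsq

theorem fp_mul_eq_pow_in_zmod_sq {p P : ℕ} (hpP : p ∣ P) (hP : ∀ i, ¬ p ∣ i → 2 * i ≠ P)
    (n : ℕ) : (fp p (P * n) : ZMod (P ^ 2)) = (fp p P : ZMod (P ^ 2)) ^ n := by
  induction n with
  | zero => simp [fp]
  | succ n ih =>
    rw [Nat.mul_succ, fp_add p _ P (hpP.mul_right n), Nat.cast_mul, ih, pow_succ _ n,
      Nat.cast_prod, prod_add_eq_prod_in_zmod_sq hpP hP (dvd_mul_right P n), fp, Nat.cast_prod]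

theorem two_mul_ne_prime_pow {p α i : ℕ} (hp : p.Prime) (hα : 1 ≤ α) (h : p ≠ 2 ∨ 2 ≤ α)
    (hi : ¬ p ∣ i) : 2 * i ≠ p ^ α := by
  intro heq
  have hp2 : p ∣ 2 := (hp.dvd_mul.1 (heq ▸ dvd_pow_self p (by omega))).resolve_right hi
  obtain rfl : p = 2 := (Nat.prime_dvd_prime_iff_eq hp Nat.prime_two).1 hp2
  have h4 : 2 * 2 ∣ 2 * i := heq ▸ pow_dvd_pow 2 (h.resolve_left (absurd rfl))
  exact hi (Nat.dvd_of_mul_dvd_mul_left two_pos h4)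

theorem fp_pow_dvd (p α : ℕ) (hp : p.Prime) (hα : 1 ≤ α)
    (h : p ≠ 2 ∨ 2 ≤ α) (n : ℕ) :
    (p : ℤ) ^ (2 * α) ∣ (fp p (p ^ α * n) : ℤ) - (fp p (p ^ α) : ℤ) ^ n := by
  have hzmod := fp_mul_eq_pow_in_zmod_sq (dvd_pow_self p (by omega : α ≠ 0))
    (fun _ => two_mul_ne_prime_pow hp hα h) n
  rw [← Nat.cast_pow, ZMod.natCast_eq_natCast_iff, Nat.modEq_iff_dvd] at hzmod
  simpa [pow_mul'] using dvd_sub_comm.1 hzmod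
end

section
/- Let p be a prime, n ≥ 1 an integer with p ∣ n, and τ ≥ 0 an integer. Then C((τ+1)n − 1, n − 1) · f_p(τn) · f_p(n) = C((τ+1)·(n/p) − 1, n/p − 1) · f_p((τ+1)n), where C(a,b) denotes the binomial coefficient. -/
/-!
The multiples of `p` in `[1, p m]` are `p, 2p, …, mp`, whose product is `p ^ m * m !`; hence
`fp p (p m) = (p m)! / (p ^ m * m !)`. In the quotient of binomial coefficients the powers of `p`
cancel, and `C(k n, n) = k * C(k n - 1, n - 1)` lets the factor `τ + 1` cancel as well.
-/

open Finset Nat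

theorem prod_Icc_id_eq_factorial (n : ℕ) : ∏ i ∈ Icc 1 n, i = n ! := by
  rw [← Ico_add_one_right_eq_Icc, prod_Ico_id_eq_factorial]

theorem filter_dvd_Icc_eq_image {p : ℕ} (hp : 0 < p) (m : ℕ) :
    (Icc 1 (p * m)).filter (p ∣ ·) = (Icc 1 m).image (p * ·) := by
  ext i
  simp only [mem_filter, mem_Icc, mem_image]
  constructor
  · rintro ⟨⟨h1, h2⟩, j, rfl⟩
    exact ⟨j, ⟨Nat.pos_of_mul_pos_left h1, Nat.le_of_mul_le_mul_left h2 hp⟩, rfl⟩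
  · rintro ⟨j, ⟨hj1, hj2⟩, rfl⟩
    exact ⟨⟨Nat.mul_pos hp hj1, Nat.mul_le_mul_left p hj2⟩, dvd_mul_right p j⟩

theorem prod_filter_dvd_Icc {p : ℕ} (hp : 0 < p) (m : ℕ) :
    ∏ i ∈ (Icc 1 (p * m)).filter (p ∣ ·), i = p ^ m * m ! := by
  rw [filter_dvd_Icc_eq_image hp, prod_image fun _ _ _ _ h => Nat.eq_of_mul_eq_mul_left hp h,
    prod_mul_distrib, prod_const, Nat.card_Icc, Nat.add_sub_cancel, prod_Icc_id_eq_factorial]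

theorem fp_mul_mul_pow_mul_factorial {p : ℕ} (hp : 0 < p) (m : ℕ) :
    fp p (p * m) * (p ^ m * m !) = (p * m)! := by
  rw [fp, ← prod_filter_dvd_Icc hp, mul_comm, prod_filter_mul_prod_filter_not,
    prod_Icc_id_eq_factorial]

theorem choose_mul_fp_mul_fp {p : ℕ} (hp : 0 < p) (a b : ℕ) :
    (p * (a + b)).choose (p * b) * fp p (p * a) * fp p (p * b) =
      (a + b).choose b * fp p (p * (a + b)) := by
  have hpos : 0 < p ^ a * a ! * (p ^ b * b !) := by positivity
  refine Nat.eq_of_mul_eq_mul_right hpos ?_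
  calc _ = (p * a + p * b).choose (p * b) * (fp p (p * a) * (p ^ a * a !)) *
          (fp p (p * b) * (p ^ b * b !)) := by
        rw [mul_add]; ring
    _ = (p * (a + b))! := by
        rw [fp_mul_mul_pow_mul_factorial hp, fp_mul_mul_pow_mul_factorial hp,
          add_choose_mul_factorial_mul_factorial, mul_add]
    _ = fp p (p * (a + b)) * (p ^ (a + b) * ((a + b).choose b * a ! * b !)) := by
        rw [add_choose_mul_factorial_mul_factorial, fp_mul_mul_pow_mul_factorial hp]
    _ = (a + b).choose b * fp p (p * (a + b)) * (p ^ a * a ! * (p ^ b * b !)) := by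
        ring

theorem choose_mul_fp_eq_general (p n τ : ℕ) (hn : 1 ≤ n) (hpn : p ∣ n) :
    Nat.choose ((τ + 1) * n - 1) (n - 1) * fp p (τ * n) * fp p n =
      Nat.choose ((τ + 1) * (n / p) - 1) (n / p - 1) * fp p ((τ + 1) * n) := by
  have hp : 0 < p := Nat.pos_of_dvd_of_pos hpn hn
  obtain ⟨m, rfl⟩ := hpn
  have hm : m ≠ 0 := by rintro rfl; simp at hn
  rw [Nat.mul_div_cancel_left m hp]
  have key := choose_mul_fp_mul_fp hp (τ * m) m
  rw [show p * (τ * m + m) = (τ + 1) * (p * m) by ring, show τ * m + m = (τ + 1) * m by ring,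
    show p * (τ * m) = τ * (p * m) by ring, choose_mul_right (by positivity),
    choose_mul_right hm] at key
  refine Nat.eq_of_mul_eq_mul_left τ.succ_pos ?_
  simpa only [mul_assoc] using key

theorem choose_mul_fp_eq (p n τ : ℕ) (hp : p.Prime) (hn : 1 ≤ n) (hpn : p ∣ n) :
    Nat.choose ((τ + 1) * n - 1) (n - 1) * fp p (τ * n) * fp p n =
      Nat.choose ((τ + 1) * (n / p) - 1) (n / p - 1) * fp p ((τ + 1) * n) :=
  choose_mul_fp_eq_general p n τ hn hpn
end

section
/- Let p be a prime, α ≥ 1 an integer, a ≥ 1 an integer with p ∤ a, and set n = p^α · a. Then for every integer τ ≥ 0, p^{2α} divides (−1)^{τn} C((τ+1)n − 1, n − 1) − (−1)^{τ n/p} C((τ+1)·(n/p) − 1, n/p − 1), as integers. -/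
/-!
Write `n = p m` and let `S` be the integers in `(0, n)` prime to `p`. Splitting
`∏_{0<j<n} (τ n + j) = (n-1)! C((τ+1)n-1, n-1)` into multiples of `p` and elements of `S`
gives `C((τ+1)n-1, n-1) ∏_S j = C((τ+1)m-1, m-1) ∏_S (τ n + j)`. Modulo `p^{2α}` we have
`n² ≡ 0`, so `(τ n + j)(τ n + n - j) ≡ j (n - j)`, and pairing `j` with `n - j` gives
`∏_S (τ n + j) ≡ ∏_S j`. The pairing has a fixed point only for `p = 2`, `α = 1`, where the
factor `τ n + m = (2τ + 1) m ≡ (-1)^τ m (mod 4)` supplies the sign. Cancelling the unit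
`∏_S j` finishes.
-/

open Finset Nat

def nonMultiples (p n : ℕ) : Finset ℕ := {j ∈ Ioo 0 n | ¬ p ∣ j}

lemma mem_nonMultiples {p n j : ℕ} :
    j ∈ nonMultiples p n ↔ 0 < j ∧ j < n ∧ ¬ p ∣ j := by
  simp [nonMultiples, and_assoc]

lemma sub_mem_nonMultiples {p n j : ℕ} (hpn : p ∣ n) (hj : j ∈ nonMultiples p n) :
    n - j ∈ nonMultiples p n := by
  obtain ⟨hj0, hjn, hpj⟩ := mem_nonMultiples.mp hj
  refine mem_nonMultiples.mpr ⟨by omega, by omega, fun hd => hpj ?_⟩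
  simpa [Nat.sub_sub_self hjn.le] using Nat.dvd_sub hpn hd

lemma sub_ne_self_of_mem_nonMultiples {p m j : ℕ} (hp : p.Prime) (hpm : p ≠ 2 ∨ 2 ∣ m)
    (hj : j ∈ nonMultiples p (p * m)) : p * m - j ≠ j := by
  intro hfix
  obtain ⟨-, -, hpj⟩ := mem_nonMultiples.mp hj
  have hp2j : p ∣ 2 * j := ⟨m, by omega⟩
  obtain rfl : p = 2 := (Nat.prime_dvd_prime_iff_eq hp Nat.prime_two).mp
    ((hp.dvd_mul.mp hp2j).resolve_right hpj)
  exact hpj (by rw [show j = m by omega]; simpa using hpm)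

lemma isUnit_of_mem_nonMultiples {p n j : ℕ} (hp : p.Prime) (hj : j ∈ nonMultiples p n)
    (e : ℕ) : IsUnit (j : ZMod (p ^ e)) :=
  (ZMod.isUnit_iff_coprime _ _).mpr <|
    (Nat.coprime_comm.mp (hp.coprime_iff_not_dvd.mpr (mem_nonMultiples.mp hj).2.2)).pow_right e

lemma prod_Ioo_mul_add_eq_factorial_mul_choose (τ : ℕ) {N : ℕ} (hN : 0 < N) :
    ∏ j ∈ Ioo 0 N, (τ * N + j) = (N - 1)! * ((τ + 1) * N - 1).choose (N - 1) := by
  obtain ⟨N, rfl⟩ : ∃ M, N = M + 1 := ⟨N - 1, by omega⟩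
  rw [← Finset.Ico_succ_left_eq_Ioo, Order.succ_eq_add_one, prod_Ico_eq_prod_range,
    add_tsub_cancel_right, show (τ + 1) * (N + 1) - 1 = τ * (N + 1) + N by ring_nf; omega,
    ← ascFactorial_eq_factorial_mul_choose, ascFactorial_eq_prod_range]
  exact prod_congr rfl fun i _ => by ring

lemma prod_Ioo_mul_eq_prod_mul_prod_nonMultiples {M : Type*} [CommMonoid M] {p : ℕ} (hp : 0 < p)
    (m : ℕ) (f : ℕ → M) :
    ∏ j ∈ Ioo 0 (p * m), f j =
      (∏ i ∈ Ioo 0 m, f (p * i)) * ∏ j ∈ nonMultiples p (p * m), f j := by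
  rw [← prod_filter_mul_prod_filter_not (Ioo 0 (p * m)) (p ∣ ·)]
  congr 1
  have hmultiples : {j ∈ Ioo 0 (p * m) | p ∣ j} = (Ioo 0 m).image (p * ·) := by
    ext j
    simp only [mem_filter, mem_Ioo, mem_image]
    constructor
    · rintro ⟨⟨hj0, hjn⟩, i, rfl⟩
      exact ⟨i, ⟨Nat.pos_of_mul_pos_left hj0, Nat.lt_of_mul_lt_mul_left hjn⟩, rfl⟩
    · rintro ⟨i, ⟨hi0, him⟩, rfl⟩
      exact ⟨⟨Nat.mul_pos hp hi0, Nat.mul_lt_mul_of_pos_left him hp⟩, dvd_mul_right p i⟩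
  rw [hmultiples, prod_image fun x _ y _ h => Nat.eq_of_mul_eq_mul_left hp h]

lemma factorial_mul_choose_eq_pow_mul_prod_nonMultiples {p m : ℕ} (hp : 0 < p) (hm : 0 < m)
    (τ : ℕ) :
    (p * m - 1)! * ((τ + 1) * (p * m) - 1).choose (p * m - 1) =
      p ^ (m - 1) * ((m - 1)! * ((τ + 1) * m - 1).choose (m - 1)) *
        ∏ j ∈ nonMultiples p (p * m), (τ * (p * m) + j) := by
  have hfactor : ∀ i, τ * (p * m) + p * i = p * (τ * m + i) := fun i => by ring
  rw [← prod_Ioo_mul_add_eq_factorial_mul_choose τ (Nat.mul_pos hp hm),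
    prod_Ioo_mul_eq_prod_mul_prod_nonMultiples hp,
    ← prod_Ioo_mul_add_eq_factorial_mul_choose τ hm]
  simp only [hfactor, prod_mul_distrib, prod_const, Nat.card_Ioo, Nat.sub_zero]

lemma choose_mul_prod_nonMultiples {p m : ℕ} (hp : 0 < p) (hm : 0 < m) (τ : ℕ) :
    ((τ + 1) * (p * m) - 1).choose (p * m - 1) * ∏ j ∈ nonMultiples p (p * m), j =
      ((τ + 1) * m - 1).choose (m - 1) * ∏ j ∈ nonMultiples p (p * m), (τ * (p * m) + j) := by
  have hfact := factorial_mul_choose_eq_pow_mul_prod_nonMultiples hp hm 0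
  simp only [zero_add, one_mul, Nat.choose_self, mul_one, zero_mul] at hfact
  apply Nat.eq_of_mul_eq_mul_left (by positivity : 0 < p ^ (m - 1) * (m - 1)!)
  calc _ = (p * m - 1)! * ((τ + 1) * (p * m) - 1).choose (p * m - 1) := by rw [hfact]; ring
    _ = _ := by rw [factorial_mul_choose_eq_pow_mul_prod_nonMultiples hp hm]; ring

lemma prod_mul_add_eq_prod {R : Type*} [CommRing R] {n : ℕ} (hn : (n : R) * n = 0) (τ : ℕ)
    {T : Finset ℕ} (hle : ∀ j ∈ T, j ≤ n) (hmem : ∀ j ∈ T, n - j ∈ T)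
    (hne : ∀ j ∈ T, n - j ≠ j) (hunit : ∀ j ∈ T, IsUnit (j : R)) :
    ∏ j ∈ T, ((τ * n + j : ℕ) : R) = ∏ j ∈ T, (j : R) := by
  set f : ℕ → R := fun j => ((τ * n + j : ℕ) : R) * Ring.inverse (j : R)
  have hreflect : ∀ j ∈ T, f j * f (n - j) = 1 := by
    intro j hj
    have hpair : ((τ * n + j : ℕ) : R) * ((τ * n + (n - j) : ℕ) : R) = j * (n - j : ℕ) := by
      push_cast [Nat.cast_sub (hle j hj)]
      linear_combination (τ * (τ + 1) : R) * hn
    calc f j * f (n - j)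
        = ((τ * n + j : ℕ) : R) * ((τ * n + (n - j) : ℕ) : R) *
            (Ring.inverse (j : R) * Ring.inverse ((n - j : ℕ) : R)) := by ring
      _ = 1 := by
          rw [hpair, mul_mul_mul_comm, Ring.mul_inverse_cancel _ (hunit j hj),
            Ring.mul_inverse_cancel _ (hunit _ (hmem j hj)), one_mul]
  have hprod : ∏ j ∈ T, f j = 1 :=
    prod_involution (fun j _ => n - j) hreflect (fun j hj _ => hne j hj) hmem
      (fun j hj => Nat.sub_sub_self (hle j hj))
  calc ∏ j ∈ T, ((τ * n + j : ℕ) : R) = (∏ j ∈ T, f j) * ∏ j ∈ T, (j : R) := by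
        rw [← prod_mul_distrib]
        refine prod_congr rfl fun j hj => ?_
        rw [mul_assoc, Ring.inverse_mul_cancel _ (hunit j hj), mul_one]
    _ = ∏ j ∈ T, (j : R) := by rw [hprod, one_mul]

lemma prod_nonMultiples_mul_add_eq_prod {p m e : ℕ} (hp : p.Prime) (hpm : p ≠ 2 ∨ 2 ∣ m)
    (he : p ^ e ∣ p * m * (p * m)) (τ : ℕ) :
    ∏ j ∈ nonMultiples p (p * m), ((τ * (p * m) + j : ℕ) : ZMod (p ^ e)) =
      ∏ j ∈ nonMultiples p (p * m), (j : ZMod (p ^ e)) := by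
  refine prod_mul_add_eq_prod (by exact_mod_cast (ZMod.natCast_eq_zero_iff _ _).mpr he) τ
    (fun j hj => (mem_nonMultiples.mp hj).2.1.le)
    (fun j => sub_mem_nonMultiples (dvd_mul_right p m))
    (fun j => sub_ne_self_of_mem_nonMultiples hp hpm)
    (fun j hj => isUnit_of_mem_nonMultiples hp hj e)

lemma two_mul_add_one_eq_neg_one_pow {R : Type*} [CommRing R] (h4 : (4 : R) = 0) (τ : ℕ) :
    2 * (τ : R) + 1 = (-1) ^ τ := by
  induction τ with
  | zero => simp
  | succ τ ih =>
    rw [pow_succ, ← ih]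
    push_cast
    linear_combination (τ + 1 : R) * h4

lemma neg_one_pow_mul_prod_nonMultiples_two {e m : ℕ} (he : 2 ^ e ∣ 4) (hm : Odd m) (τ : ℕ) :
    (-1) ^ (τ * (2 * m)) *
        ∏ j ∈ nonMultiples 2 (2 * m), ((τ * (2 * m) + j : ℕ) : ZMod (2 ^ e)) =
      (-1) ^ (τ * m) * ∏ j ∈ nonMultiples 2 (2 * m), (j : ZMod (2 ^ e)) := by
  set S := nonMultiples 2 (2 * m)
  have hmS : m ∈ S :=
    mem_nonMultiples.mpr ⟨hm.pos, by have := hm.pos; omega, hm.not_two_dvd_nat⟩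
  have h4 : (4 : ZMod (2 ^ e)) = 0 := by exact_mod_cast (ZMod.natCast_eq_zero_iff _ _).mpr he
  have hnn : ((2 * m : ℕ) : ZMod (2 ^ e)) * (2 * m : ℕ) = 0 := by
    push_cast
    linear_combination (m * m : ZMod (2 ^ e)) * h4
  have hrest : ∏ j ∈ S.erase m, ((τ * (2 * m) + j : ℕ) : ZMod (2 ^ e)) =
      ∏ j ∈ S.erase m, (j : ZMod (2 ^ e)) := by
    have hlt : ∀ j ∈ S.erase m, j < 2 * m ∧ j ≠ m := fun j hj =>
      ⟨(mem_nonMultiples.mp (mem_of_mem_erase hj)).2.1, ne_of_mem_erase hj⟩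
    refine prod_mul_add_eq_prod hnn τ (fun j hj => (hlt j hj).1.le) (fun j hj => ?_)
      (fun j hj => by have := hlt j hj; omega)
      (fun j hj => isUnit_of_mem_nonMultiples Nat.prime_two (mem_of_mem_erase hj) e)
    exact mem_erase.mpr ⟨by have := hlt j hj; omega,
      sub_mem_nonMultiples (dvd_mul_right 2 m) (mem_of_mem_erase hj)⟩
  have hfixed : ((τ * (2 * m) + m : ℕ) : ZMod (2 ^ e)) = (-1) ^ τ * m := by
    rw [← two_mul_add_one_eq_neg_one_pow h4]
    push_cast
    ring
  rw [← mul_prod_erase S _ hmS, ← mul_prod_erase S (fun j : ℕ => (j : ZMod (2 ^ e))) hmS,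
    hrest, hfixed, ((even_two_mul m).mul_left τ).neg_one_pow, pow_mul' (-1 : ZMod (2 ^ e)) τ m,
    hm.neg_one_pow]
  ring

lemma neg_one_pow_mul_mul_eq {R : Type*} [Monoid R] [HasDistribNeg R] {p m : ℕ} (hp : p.Prime)
    (hpm : p ≠ 2 ∨ 2 ∣ m) (τ : ℕ) : (-1 : R) ^ (τ * (p * m)) = (-1) ^ (τ * m) := by
  have heven : Even ((p - 1) * m) := hpm.elim (fun h => (hp.even_sub_one h).mul_right m)
    (fun h => (even_iff_two_dvd.mpr h).mul_left _)
  obtain ⟨q, rfl⟩ : ∃ q, p = q + 1 := ⟨p - 1, (Nat.sub_add_cancel hp.one_le).symm⟩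
  rw [add_tsub_cancel_right] at heven
  rw [show τ * ((q + 1) * m) = τ * m + τ * (q * m) by ring, pow_add,
    (heven.mul_left τ).neg_one_pow, mul_one]

lemma neg_one_pow_mul_prod_nonMultiples {p k a m : ℕ} (hp : p.Prime) (hpa : ¬ p ∣ a)
    (hm : m = p ^ k * a) (τ : ℕ) :
    (-1) ^ (τ * (p * m)) *
        ∏ j ∈ nonMultiples p (p * m), ((τ * (p * m) + j : ℕ) : ZMod (p ^ (2 * (k + 1)))) =
      (-1) ^ (τ * m) * ∏ j ∈ nonMultiples p (p * m), (j : ZMod (p ^ (2 * (k + 1)))) := by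
  by_cases hexc : p = 2 ∧ k = 0
  · obtain ⟨rfl, rfl⟩ := hexc
    exact neg_one_pow_mul_prod_nonMultiples_two (by norm_num)
      (by simpa [hm, Nat.odd_iff, Nat.two_dvd_ne_zero] using hpa) τ
  · have hpm : p ≠ 2 ∨ 2 ∣ m := by
      refine or_iff_not_imp_left.mpr fun hp2 => ?_
      rw [not_not] at hp2
      subst hp2
      rw [hm]
      exact (dvd_pow_self 2 fun hk => hexc ⟨rfl, hk⟩).mul_right a
    rw [neg_one_pow_mul_mul_eq hp hpm,
      prod_nonMultiples_mul_add_eq_prod hp hpm ⟨a * a, by rw [hm]; ring⟩]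

theorem pow_dvd_signed_choose_sub_general (p α a n τ : ℕ) (hp : p.Prime)
    (hpa : ¬ p ∣ a) (hn : n = p ^ α * a) :
    (p : ℤ) ^ (2 * α) ∣
      (-1 : ℤ) ^ (τ * n) * Nat.choose ((τ + 1) * n - 1) (n - 1)
        - (-1 : ℤ) ^ (τ * (n / p)) * Nat.choose ((τ + 1) * (n / p) - 1) (n / p - 1) := by
  rcases α with _ | k
  · simp
  have ha : 0 < a := Nat.pos_of_ne_zero fun ha => hpa (ha ▸ dvd_zero p)
  obtain ⟨m, hm⟩ : ∃ m, m = p ^ k * a := ⟨_, rfl⟩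
  obtain rfl : n = p * m := by rw [hn, hm, pow_succ]; ring
  rw [Nat.mul_div_cancel_left m hp.pos]
  have hW : IsUnit (∏ j ∈ nonMultiples p (p * m), (j : ZMod (p ^ (2 * (k + 1))))) :=
    IsUnit.prod_iff.mpr fun j hj => isUnit_of_mem_nonMultiples hp hj _
  have hchoose := congrArg (Nat.cast : ℕ → ZMod (p ^ (2 * (k + 1))))
    (choose_mul_prod_nonMultiples hp.pos (hm ▸ Nat.mul_pos (pow_pos hp.pos k) ha) τ)
  have hsign := neg_one_pow_mul_prod_nonMultiples hp hpa hm τ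
  rw [← Nat.cast_pow, ← ZMod.intCast_eq_intCast_iff_dvd_sub]
  refine hW.mul_right_cancel ?_
  push_cast at hchoose hsign ⊢
  linear_combination (-(-1) ^ (τ * (p * m)) : ZMod (p ^ (2 * (k + 1)))) * hchoose
    - (((τ + 1) * m - 1).choose (m - 1) : ZMod (p ^ (2 * (k + 1)))) * hsign

theorem pow_dvd_signed_choose_sub (p α a n τ : ℕ) (hp : p.Prime) (hα : 1 ≤ α)
    (ha : 1 ≤ a) (hpa : ¬ p ∣ a) (hn : n = p ^ α * a) :
    (p : ℤ) ^ (2 * α) ∣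
      (-1 : ℤ) ^ (τ * n) * Nat.choose ((τ + 1) * n - 1) (n - 1)
        - (-1 : ℤ) ^ (τ * (n / p)) * Nat.choose ((τ + 1) * (n / p) - 1) (n / p - 1) :=
  pow_dvd_signed_choose_sub_general p α a n τ hp hpa hn
end

section
/- Let p be a prime, m ≥ 1 an integer whose p-adic valuation α = v_p(m) satisfies α ≥ 1, and τ ≥ 0 an integer. Then p^{2α} divides ∑_{d ∣ m} μ(m/d) · (−1)^{dτ} · C(d(τ+1) − 1, d − 1), where the sum is over the positive divisors d of m. -/
/-!
Write `g d = signedChoose τ d = (-1)^(dτ) C(d(τ+1)-1, d-1)`. Since `μ (p b) = -μ b` for `p ∤ b`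
and `0` otherwise, the sum `∑_{a ∣ m} μ(a) g(m/a)` collapses to `∑ μ(b) (g(m/b) - g(m/(pb)))`
over the divisors `b` of `m/p` prime to `p`; with `k = m/(pb)` we have `p^α ∣ pk`, so it suffices that
`g(pk) ≡ g(k) mod p^(2β)` whenever `p^β ∣ pk`.

Stripping the multiples of `p` from `C(pk(τ+1)-1, pk-1) = ∏_{0<j<pk} (pkτ + j)/j` leaves
`C(k(τ+1)-1, k-1)` times `∏ (pkτ + j)/j` over the `j < pk` prime to `p`. Pairing `j` with
`pk - j`, the factors satisfy `(pkτ + j)(pkτ + pk - j) ≡ j (pk - j) mod (pk)^2`; the only unpaired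
factor is `j = k` when `p = 2` and `k` is odd, and modulo `4` it contributes the sign
`(-1)^τ` that `g` compensates.
-/

open Finset Nat ArithmeticFunction
open scoped ArithmeticFunction.Moebius

theorem prod_Ico_one_mul_eq_prod_not_dvd_mul {M : Type*} [CommMonoid M] {p : ℕ} (hp : 0 < p)
    (k : ℕ) (f : ℕ → M) :
    ∏ j ∈ Ico 1 (p * k), f j =
      (∏ j ∈ Ico 1 (p * k) with ¬p ∣ j, f j) * ∏ i ∈ Ico 1 k, f (p * i) := by
  have hmultiples : {j ∈ Ico 1 (p * k) | p ∣ j} = (Ico 1 k).image (p * ·) := by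
    ext j
    simp only [mem_filter, mem_Ico, mem_image]
    constructor
    · rintro ⟨⟨h1, h2⟩, i, rfl⟩
      exact ⟨i, ⟨Nat.pos_of_mul_pos_left h1, Nat.lt_of_mul_lt_mul_left h2⟩, rfl⟩
    · rintro ⟨i, ⟨h1, h2⟩, rfl⟩
      exact ⟨⟨Nat.mul_pos hp h1, Nat.mul_lt_mul_of_pos_left h2 hp⟩, dvd_mul_right p i⟩
  rw [← prod_filter_not_mul_prod_filter _ (p ∣ ·), hmultiples,
    prod_image fun _ _ _ _ h => Nat.eq_of_mul_eq_mul_left hp h]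

theorem prod_Ico_one_add (a k : ℕ) :
    ∏ i ∈ Ico 1 k, (a + i) = (k - 1)! * (a + (k - 1)).choose (k - 1) := by
  rw [prod_Ico_eq_prod_range, ← ascFactorial_eq_factorial_mul_choose, ascFactorial_eq_prod_range]
  simp only [add_assoc]

theorem choose_mul_prod_not_dvd {p : ℕ} (hp : 0 < p) (a k : ℕ) :
    (p * a + (p * k - 1)).choose (p * k - 1) * ∏ j ∈ Ico 1 (p * k) with ¬p ∣ j, j =
      (a + (k - 1)).choose (k - 1) * ∏ j ∈ Ico 1 (p * k) with ¬p ∣ j, (p * a + j) := by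
  have hsplit (b : ℕ) : ∏ j ∈ Ico 1 (p * k), (p * b + j) =
      (∏ j ∈ Ico 1 (p * k) with ¬p ∣ j, (p * b + j)) *
        (p ^ (k - 1) * (k - 1)! * (b + (k - 1)).choose (k - 1)) := by
    rw [prod_Ico_one_mul_eq_prod_not_dvd_mul hp, mul_assoc (p ^ _), ← prod_Ico_one_add]
    simp only [← mul_add, prod_mul_distrib, prod_const, card_Ico]
  have hpos : 0 < p ^ (k - 1) * (k - 1)! := by positivity
  apply Nat.eq_of_mul_eq_mul_right hpos
  calc _ = (p * a + (p * k - 1)).choose (p * k - 1) * ∏ j ∈ Ico 1 (p * k), (p * 0 + j) := by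
        rw [hsplit 0]; simp [mul_assoc]
    _ = ∏ j ∈ Ico 1 (p * k), (p * a + j) := by
        rw [prod_Ico_one_add, prod_Ico_one_add]; simp [mul_comm]
    _ = _ := by rw [hsplit a]; ring

theorem prod_eq_prod_pairs_mul_prod_mid {M : Type*} [CommMonoid M] {S : Finset ℕ} {n : ℕ}
    (hS : ∀ j ∈ S, j ≤ n ∧ n - j ∈ S) (f : ℕ → M) :
    ∏ j ∈ S, f j = (∏ j ∈ S with 2 * j < n, f j * f (n - j)) * ∏ j ∈ S with 2 * j = n, f j := by
  have hupper : ∏ j ∈ S with n < 2 * j, f j = ∏ j ∈ S with 2 * j < n, f (n - j) := by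
    refine prod_nbij' (n - ·) (n - ·) (fun j hj => ?_) (fun j hj => ?_) (fun j hj => ?_)
      (fun j hj => ?_) (fun j hj => ?_) <;>
      obtain ⟨hjS, hj⟩ := mem_filter.1 hj <;> obtain ⟨hjn, hnj⟩ := hS j hjS
    · exact mem_filter.2 ⟨hnj, by omega⟩
    · exact mem_filter.2 ⟨hnj, by omega⟩
    · exact Nat.sub_sub_self hjn
    · exact Nat.sub_sub_self hjn
    · rw [Nat.sub_sub_self hjn]
  have hmid : {j ∈ S | ¬2 * j < n ∧ 2 * j = n} = {j ∈ S | 2 * j = n} :=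
    filter_congr fun j _ => by omega
  have hnot : {j ∈ S | ¬2 * j < n ∧ ¬2 * j = n} = {j ∈ S | n < 2 * j} :=
    filter_congr fun j _ => by omega
  rw [prod_mul_distrib, ← hupper, ← prod_filter_mul_prod_filter_not S (2 * · < n),
    ← prod_filter_mul_prod_filter_not (S.filter (¬2 * · < n)) (2 * · = n), filter_filter,
    filter_filter, hmid, hnot, mul_right_comm, mul_assoc]

theorem prod_eq_mul_prod_of_pairs {M : Type*} [CommMonoid M] {S : Finset ℕ} {n : ℕ}
    (hS : ∀ j ∈ S, j ≤ n ∧ n - j ∈ S) {f g : ℕ → M} {c : M}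
    (hpair : ∀ j ∈ S, 2 * j < n → f j * f (n - j) = g j * g (n - j))
    (hmid : ∏ j ∈ S with 2 * j = n, f j = c * ∏ j ∈ S with 2 * j = n, g j) :
    ∏ j ∈ S, f j = c * ∏ j ∈ S, g j := by
  rw [prod_eq_prod_pairs_mul_prod_mid hS f, prod_eq_prod_pairs_mul_prod_mid hS g, hmid,
    prod_congr rfl fun j hj => hpair j (mem_filter.1 hj).1 (mem_filter.1 hj).2, mul_left_comm]

theorem sub_mem_Ico_not_dvd {p k j : ℕ} (hj : j ∈ {i ∈ Ico 1 (p * k) | ¬p ∣ i}) :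
    j ≤ p * k ∧ p * k - j ∈ {i ∈ Ico 1 (p * k) | ¬p ∣ i} := by
  simp only [mem_filter, mem_Ico] at hj ⊢
  refine ⟨by omega, ⟨by omega, by omega⟩, fun h => hj.2 ?_⟩
  simpa [Nat.sub_sub_self hj.1.2.le] using Nat.dvd_sub (dvd_mul_right p k) h

theorem filter_two_mul_eq_of_odd {k : ℕ} (hk : ¬2 ∣ k) :
    {j ∈ Ico 1 (2 * k) | ¬2 ∣ j ∧ 2 * j = 2 * k} = {k} := by
  ext j
  simp only [mem_filter, mem_Ico, mem_singleton]
  omega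

theorem filter_two_mul_eq_eq_empty {p k : ℕ} (hp : p.Prime) (hpk : ¬(p = 2 ∧ ¬2 ∣ k)) :
    {j ∈ Ico 1 (p * k) | ¬p ∣ j ∧ 2 * j = p * k} = ∅ := by
  refine filter_eq_empty_iff.2 fun j _ ⟨hpj, hjk⟩ => ?_
  rcases hp.eq_two_or_odd' with rfl | hodd
  · omega
  · refine hpj ((hp.dvd_mul.1 ⟨k, hjk⟩).resolve_left fun h2 => ?_)
    rw [Nat.prime_dvd_prime_iff_eq hp prime_two] at h2
    subst h2
    exact absurd hodd (by decide)

theorem four_dvd_neg_one_pow_mul_sub {k : ℕ} (hk : ¬2 ∣ k) (τ : ℕ) :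
    (4 : ℤ) ∣ (-1) ^ ((2 * k + k) * τ) * k - (2 * k * τ + k) := by
  have hk : Odd (2 * k + k) := by rw [Nat.odd_iff]; omega
  rcases Nat.even_or_odd τ with ⟨s, rfl⟩ | ⟨s, rfl⟩
  · rw [(Even.mul_left ⟨s, rfl⟩ _).neg_one_pow]
    exact ⟨-(k * s), by push_cast; ring⟩
  · rw [(hk.mul (odd_two_mul_add_one s)).neg_one_pow]
    exact ⟨-(k * (s + 1)), by push_cast; ring⟩

theorem add_mul_mul_add_sub_mul (n j t : ℕ) (hj : j ≤ n) :
    (n * t + j) * (n * t + (n - j)) = j * (n - j) + n ^ 2 * (t ^ 2 + t) := by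
  obtain ⟨i, rfl⟩ := Nat.exists_eq_add_of_le hj
  rw [Nat.add_sub_cancel_left]
  ring

theorem prod_not_dvd_add_mul_eq {p k β : ℕ} (hp : p.Prime) (hβ : p ^ β ∣ p * k) (τ : ℕ) :
    ∏ j ∈ Ico 1 (p * k) with ¬p ∣ j, ((p * k * τ + j : ℕ) : ZMod (p ^ (2 * β))) =
      (-1) ^ ((p * k + k) * τ) * ∏ j ∈ Ico 1 (p * k) with ¬p ∣ j, (j : ZMod (p ^ (2 * β))) := by
  refine prod_eq_mul_prod_of_pairs (fun j => sub_mem_Ico_not_dvd) (fun j hj _ => ?_) ?_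
  · have hsq : ((p * k) ^ 2 : ZMod (p ^ (2 * β))) = 0 := by
      exact_mod_cast (ZMod.natCast_eq_zero_iff _ _).2 (pow_mul' p 2 β ▸ pow_dvd_pow_of_dvd hβ 2)
    rw [← Nat.cast_mul, ← Nat.cast_mul, add_mul_mul_add_sub_mul _ _ _ (sub_mem_Ico_not_dvd hj).1]
    push_cast
    rw [hsq, zero_mul, add_zero]
  rw [filter_filter]
  by_cases hpk : p = 2 ∧ ¬2 ∣ k
  · obtain ⟨rfl, hk⟩ := hpk
    have hβ1 : β ≤ 1 := by
      by_contra! hβ2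
      exact hk ((Nat.mul_dvd_mul_iff_left two_pos).1 ((pow_dvd_pow 2 hβ2).trans hβ))
    rw [filter_two_mul_eq_of_odd hk, prod_singleton, prod_singleton]
    have hq : ((2 ^ (2 * β) : ℕ) : ℤ) ∣ 4 := by
      exact_mod_cast pow_dvd_pow 2 (by omega : 2 * β ≤ 2)
    have := (ZMod.intCast_eq_intCast_iff_dvd_sub ((2 * k * τ + k : ℕ) : ℤ) _ _).2
      (hq.trans (four_dvd_neg_one_pow_mul_sub hk τ))
    push_cast at this ⊢
    exact this
  · rw [filter_two_mul_eq_eq_empty hp hpk, prod_empty, prod_empty, mul_one]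
    suffices Even ((p * k + k) * τ) by rw [this.neg_one_pow]
    refine Even.mul_right ?_ τ
    rcases hp.eq_two_or_odd' with rfl | hodd
    · exact Nat.even_add.2 (iff_of_true (even_two_mul k) (even_iff_two_dvd.2 (by tauto)))
    · rw [← succ_mul]
      exact (hodd.add_one).mul_right k

def signedChoose (τ d : ℕ) : ℤ := (-1) ^ (d * τ) * (d * (τ + 1) - 1).choose (d - 1)

theorem mul_add_one_sub_one (d τ : ℕ) : d * (τ + 1) - 1 = d * τ + (d - 1) := by
  rcases d.eq_zero_or_pos with rfl | hd
  · simp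
  · rw [Nat.mul_add_one, Nat.add_sub_assoc hd]

theorem pow_two_mul_dvd_signedChoose_prime_mul_sub {p k β : ℕ} (hp : p.Prime)
    (hβ : p ^ β ∣ p * k) (τ : ℕ) :
    (p : ℤ) ^ (2 * β) ∣ signedChoose τ (p * k) - signedChoose τ k := by
  set q := p ^ (2 * β)
  set S := {j ∈ Ico 1 (p * k) | ¬p ∣ j}
  have hunit : IsUnit (∏ j ∈ S, (j : ZMod q)) := by
    rw [← Nat.cast_prod]
    exact (ZMod.isUnit_iff_coprime _ _).2 <| Nat.Coprime.pow_right _ <| Nat.Coprime.prod_left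
      fun j hj => (hp.coprime_iff_not_dvd.2 (mem_filter.1 hj).2).symm
  have hchoose : ((p * k * (τ + 1) - 1).choose (p * k - 1) : ZMod q) =
      (-1) ^ ((p * k + k) * τ) * (k * (τ + 1) - 1).choose (k - 1) := by
    have h := congrArg (Nat.cast : ℕ → ZMod q) (choose_mul_prod_not_dvd hp.pos (k * τ) k)
    simp only [← mul_assoc, Nat.cast_mul, Nat.cast_prod] at h
    rw [prod_not_dvd_add_mul_eq hp hβ τ] at h
    rw [mul_add_one_sub_one, mul_add_one_sub_one, ← hunit.mul_left_inj, h]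
    ring
  have := (ZMod.intCast_zmod_eq_zero_iff_dvd (signedChoose τ (p * k) - signedChoose τ k) q).1
  push_cast [q] at this
  refine this ?_
  have hsign : ((-1 : ZMod q) ^ (p * k * τ)) ^ 2 = 1 := by
    rw [← pow_mul, pow_mul', neg_one_sq, one_pow]
  push_cast [signedChoose, hchoose]
  linear_combination (-1 : ZMod q) ^ (k * τ) * ((k * (τ + 1) - 1).choose (k - 1) : ZMod q) * hsign

theorem moebius_prime_mul {p : ℕ} (hp : p.Prime) (b : ℕ) :
    μ (p * b) = if p ∣ b then 0 else -μ b := by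
  split_ifs with hpb
  · refine moebius_eq_zero_of_not_squarefree fun h => hp.one_lt.ne' ?_
    exact Nat.isUnit_iff.1 (h p (mul_dvd_mul_left p hpb))
  · rw [isMultiplicative_moebius.map_mul_of_coprime (hp.coprime_iff_not_dvd.2 hpb),
      moebius_apply_prime hp, neg_one_mul]

theorem sum_divisors_prime_mul_moebius_smul {M : Type*} [AddCommGroup M] {p : ℕ} (hp : p.Prime)
    (k : ℕ) (f : ℕ → M) :
    ∑ a ∈ (p * k).divisors, μ a • f a = ∑ b ∈ k.divisors with ¬p ∣ b, μ b • (f b - f (p * b)) := by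
  have hcoprime : {a ∈ (p * k).divisors | ¬p ∣ a} = {b ∈ k.divisors | ¬p ∣ b} := by
    ext a
    simp only [mem_filter, Nat.mem_divisors, mul_ne_zero_iff, ne_eq, hp.ne_zero, not_false_eq_true,
      true_and]
    exact ⟨fun ⟨⟨ha, hk⟩, hpa⟩ =>
      ⟨⟨(hp.coprime_iff_not_dvd.2 hpa).symm.dvd_of_dvd_mul_left ha, hk⟩, hpa⟩,
      fun ⟨⟨ha, hk⟩, hpa⟩ => ⟨⟨ha.mul_left p, hk⟩, hpa⟩⟩
  have hmultiples : ∑ a ∈ (p * k).divisors with p ∣ a, μ a • f a =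
      ∑ b ∈ k.divisors, μ (p * b) • f (p * b) := by
    symm
    refine sum_nbij' (p * ·) (· / p) ?_ ?_ ?_ ?_ (fun _ _ => rfl)
    · intro b hb
      simp only [mem_filter, Nat.mem_divisors] at hb ⊢
      exact ⟨⟨mul_dvd_mul_left p hb.1, mul_ne_zero hp.ne_zero hb.2⟩, dvd_mul_right p b⟩
    · intro a ha
      obtain ⟨⟨ha, hk⟩, b, rfl⟩ := mem_filter.1 ha |>.imp_left Nat.mem_divisors.1
      rw [Nat.mul_div_cancel_left b hp.pos, Nat.mem_divisors]
      exact ⟨(Nat.mul_dvd_mul_iff_left hp.pos).1 ha, right_ne_zero_of_mul hk⟩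
    · intro b _
      exact Nat.mul_div_cancel_left b hp.pos
    · intro a ha
      exact Nat.mul_div_cancel' (mem_filter.1 ha).2
  rw [← sum_filter_not_add_sum_filter _ (p ∣ ·), hcoprime, hmultiples]
  simp only [smul_sub, sum_sub_distrib, moebius_prime_mul hp, ite_smul, zero_smul, neg_smul,
    sum_ite, sum_const_zero, sum_neg_distrib, zero_sub, ← sub_eq_add_neg]

theorem pow_padic_dvd_moebius_sum_general (p m τ : ℕ) (hp : p.Prime)
    (hα : 1 ≤ padicValNat p m) :
    (p : ℤ) ^ (2 * padicValNat p m) ∣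
      ∑ d ∈ m.divisors, (ArithmeticFunction.moebius (m / d)) *
        (-1 : ℤ) ^ (d * τ) * Nat.choose (d * (τ + 1) - 1) (d - 1) := by
  have hpow : p ^ padicValNat p m ∣ m := pow_padicValNat_dvd
  obtain ⟨k, rfl⟩ := dvd_of_one_le_padicValNat hα
  have hsum : ∑ d ∈ (p * k).divisors, μ (p * k / d) * (-1 : ℤ) ^ (d * τ) *
      (d * (τ + 1) - 1).choose (d - 1) =
        ∑ a ∈ (p * k).divisors, μ a • signedChoose τ (p * k / a) := by
    rw [← Nat.sum_div_divisors]
    refine sum_congr rfl fun d hd => ?_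
    rw [Nat.div_div_self (Nat.mem_divisors.1 hd).1 (Nat.mem_divisors.1 hd).2, smul_eq_mul,
      signedChoose, mul_assoc]
  rw [hsum, sum_divisors_prime_mul_moebius_smul hp]
  refine dvd_sum fun b hb => Dvd.dvd.mul_left ?_ _
  obtain ⟨⟨⟨c, rfl⟩, hk⟩, hpb⟩ := mem_filter.1 hb |>.imp_left Nat.mem_divisors.1
  have hb0 : 0 < b := Nat.pos_of_ne_zero (left_ne_zero_of_mul hk)
  rw [show p * (b * c) / b = p * c by rw [mul_left_comm, Nat.mul_div_cancel_left _ hb0],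
    Nat.mul_div_mul_left _ _ hp.pos, Nat.mul_div_cancel_left _ hb0]
  refine pow_two_mul_dvd_signedChoose_prime_mul_sub hp ?_ τ
  refine (Nat.Coprime.pow_left _ (hp.coprime_iff_not_dvd.2 hpb)).dvd_of_dvd_mul_right ?_
  exact hpow.trans (dvd_of_eq (by ring))

theorem pow_padic_dvd_moebius_sum (p m τ : ℕ) (hp : p.Prime) (hm : 1 ≤ m)
    (hα : 1 ≤ padicValNat p m) :
    (p : ℤ) ^ (2 * padicValNat p m) ∣
      ∑ d ∈ m.divisors, (ArithmeticFunction.moebius (m / d)) *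
        (-1 : ℤ) ^ (d * τ) * Nat.choose (d * (τ + 1) - 1) (d - 1) :=
  pow_padic_dvd_moebius_sum_general p m τ hp hα
end
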